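/- arXiv:2310.00173 — 5 statements merged into one kernel-verified Lean document; each statement's English description precedes it below -/
import Mathlib

section
/- If α ∈ ℝ^d is such that 1, α_1, ..., α_d are ℚ-linearly dependent, then for every η ≥ 0 the set of accumulation points of NA_η(α) is not all of ℝ^d. Consequently K_d^c ⊆ D(η)^c for all η ≥ 0, where K_d is the set of α with 1, α_1, ..., α_d ℚ-linearly independent. -/
open Filter Topology

/-- The set of η-normalized approximations to α ∈ ℝ^d. -/
noncomputable def NA (d : ℕ) (η : ℝ) (α : Fin d → ℝ) : Set (Fin d → ℝ) :=
  {x | ∃ q : ℤ, q ≠ 0 ∧ ∃ p : Fin d → ℤ,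
    x = fun i => |(q : ℝ)| ^ η * ((q : ℝ) * α i - (p i : ℝ))}

/-- γ is an accumulation point of S ⊆ ℝ^d. -/
def IsAccumulationPt {d : ℕ} (γ : Fin d → ℝ) (S : Set (Fin d → ℝ)) : Prop :=
  ∀ ε : ℝ, 0 < ε → ∃ x ∈ S, x ≠ γ ∧ ‖x - γ‖ < ε

/-!
A rational relation among 1, α₁, …, α_d can be scaled to an integer one, a + ∑ bᵢ αᵢ = 0 with
b ≠ 0. For x = |q|^η (qα - p) in NA_η(α) the linear form ∑ bᵢ xᵢ equals |q|^η · m with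
m = -qa - ∑ bᵢ pᵢ an integer; as |q|^η ≥ 1, it never lies in (0, 1). This open condition
passes to the closure of NA_η(α), so no γ with ∑ bᵢ γᵢ = 1/2 is an accumulation point.
-/

open Set

theorem exists_int_relation_of_not_linearIndependent {d : ℕ} {α : Fin d → ℝ}
    (h : ¬ LinearIndependent ℚ (Fin.cons (1 : ℝ) α : Fin (d + 1) → ℝ)) :
    ∃ (a : ℤ) (b : Fin d → ℤ), b ≠ 0 ∧ a + ∑ i, (b i : ℝ) * α i = 0 := by
  rw [← LinearIndependent.iff_fractionRing ℤ ℚ, Fintype.not_linearIndependent_iff] at h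
  obtain ⟨g, hg, i, hi⟩ := h
  have hrel : (g 0 : ℝ) + ∑ i, (g i.succ : ℝ) * α i = 0 := by
    simpa [Fin.sum_univ_succ, zsmul_eq_mul] using hg
  refine ⟨g 0, fun i => g i.succ, fun hb => hi ?_, hrel⟩
  have hb' (j : Fin d) : g j.succ = 0 := congrFun hb j
  have h0 : g 0 = 0 := by exact_mod_cast (by simpa [hb'] using hrel : (g 0 : ℝ) = 0)
  exact Fin.cases (motive := fun i => g i = 0) h0 hb' i

theorem int_mul_notMem_Ioo {t : ℝ} (ht : 1 ≤ t) (m : ℤ) : t * m ∉ Ioo (0 : ℝ) 1 := by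
  rintro ⟨hpos, hlt⟩
  have hm : (0 : ℝ) < m := pos_of_mul_pos_right hpos (by linarith)
  have hm1 : (1 : ℝ) ≤ m := by exact_mod_cast (show (0 : ℤ) < m by exact_mod_cast hm)
  nlinarith

theorem IsAccumulationPt.mem_closure {d : ℕ} {γ : Fin d → ℝ} {S : Set (Fin d → ℝ)}
    (h : IsAccumulationPt γ S) : γ ∈ closure S :=
  Metric.mem_closure_iff.2 fun ε hε => by
    obtain ⟨x, hxS, -, hx⟩ := h ε hε
    exact ⟨x, hxS, by rwa [dist_comm, dist_eq_norm]⟩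

theorem sum_mul_notMem_Ioo_of_mem_NA {d : ℕ} {η : ℝ} (hη : 0 ≤ η) {α : Fin d → ℝ} {a : ℤ}
    {b : Fin d → ℤ} (hab : a + ∑ i, (b i : ℝ) * α i = 0) {x : Fin d → ℝ} (hx : x ∈ NA d η α) :
    ∑ i, (b i : ℝ) * x i ∉ Ioo (0 : ℝ) 1 := by
  obtain ⟨q, hq, p, rfl⟩ := hx
  have hsum : ∑ i, (b i : ℝ) * (|(q : ℝ)| ^ η * ((q : ℝ) * α i - p i))
      = |(q : ℝ)| ^ η * ((-(q * a) - ∑ i, b i * p i : ℤ) : ℝ) := calc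
    _ = |(q : ℝ)| ^ η * (q * ∑ i, (b i : ℝ) * α i - ∑ i, (b i : ℝ) * p i) := by
      simp only [Finset.mul_sum, ← Finset.sum_sub_distrib]
      exact Finset.sum_congr rfl fun i _ => by ring
    _ = _ := by
      rw [eq_neg_of_add_eq_zero_right hab]
      push_cast
      ring
  rw [hsum]
  exact int_mul_notMem_Ioo (Real.one_le_rpow (by exact_mod_cast Int.one_le_abs hq) hη) _

theorem closure_NA_subset {d : ℕ} {η : ℝ} (hη : 0 ≤ η) {α : Fin d → ℝ} {a : ℤ}
    {b : Fin d → ℤ} (hab : a + ∑ i, (b i : ℝ) * α i = 0) :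
    closure (NA d η α) ⊆ {x | ∑ i, (b i : ℝ) * x i ∉ Ioo (0 : ℝ) 1} :=
  closure_minimal (fun _ hx => sum_mul_notMem_Ioo_of_mem_NA hη hab hx)
    (isOpen_Ioo.isClosed_compl.preimage (by fun_prop))

/-- If 1, α_1, ..., α_d are ℚ-linearly dependent then, for every η ≥ 0, the set of
    accumulation points of NA_η(α) is not all of ℝ^d; that is, K_d^c ⊆ D(η)^c. -/
theorem stmt5 (d : ℕ) (α : Fin d → ℝ)
    (h : ¬ LinearIndependent ℚ (Fin.cons (1 : ℝ) α : Fin (d + 1) → ℝ))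
    (η : ℝ) (hη : 0 ≤ η) :
    ¬ ∀ γ : Fin d → ℝ, IsAccumulationPt γ (NA d η α) := by
  intro hall
  obtain ⟨a, b, hb, hab⟩ := exists_int_relation_of_not_linearIndependent h
  obtain ⟨j, hj⟩ := Function.ne_iff.1 hb
  set γ : Fin d → ℝ := Pi.single j (1 / (2 * b j))
  have hγ : ∑ i, (b i : ℝ) * γ i = 1 / 2 := by
    have : (b j : ℝ) ≠ 0 := by exact_mod_cast hj
    simp only [γ, Pi.single_apply, mul_ite, mul_zero, Finset.sum_ite_eq', Finset.mem_univ, if_true]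
    field_simp
  have hγS := closure_NA_subset hη hab (hall γ).mem_closure
  exact hγS (by rw [hγ]; norm_num)
end

section
/- Let d ∈ ℕ, d ≥ 2, and ω ≥ 1/d. If α ∈ ℝ^d satisfies lim_{Q→∞} Q^ω · min_{0 < q ≤ Q} ‖qα‖ = 0, then α satisfies lim_{R→∞} R^{d-1+dω} · min{ ‖r·α‖ : r ∈ ℤ^d, 0 < |r| ≤ R } = 0, where r·α is the dot product. -/
/-!
Cassels' transference argument. Given `q ≤ K ^ d` with `q • α = p + γ`, `|γ i| ≤ δ`, look at
the vectors `r ∈ [0, (d + 1) K]^d` through the pair (`r ⬝ p mod q`, `r ⬝ γ` rounded to a grid of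
mesh `q ε`), where `ε = 4 δ / K ^ (d - 1)`. There are fewer pairs than vectors, so two vectors
collide and their difference `r` has `q ∣ r ⬝ p` and `|r ⬝ γ| < q ε`; then `r ⬝ α` is within `ε`
of an integer. With `K = R / (d + 1)` and `Q = K ^ d` this turns the decay of
`Q ^ ω · min ‖q α‖` into the decay of `R ^ (d - 1 + d ω) · min ‖r ⬝ α‖`.
-/

open Filter Topology

noncomputable def distZd {d : ℕ} (x : Fin d → ℝ) : ℝ :=
  ⨅ p : Fin d → ℤ, ‖x - (fun i => (p i : ℝ))‖

noncomputable def distZ (x : ℝ) : ℝ := ⨅ p : ℤ, |x - (p : ℝ)|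

open Finset

lemma distZ_nonneg (x : ℝ) : 0 ≤ distZ x := le_ciInf fun _ => abs_nonneg _

lemma distZ_le_abs_sub (x : ℝ) (m : ℤ) : distZ x ≤ |x - m| :=
  ciInf_le ⟨0, by rintro y ⟨p, rfl⟩; exact abs_nonneg _⟩ m

section
variable {d : ℕ}

lemma distZd_nonneg (x : Fin d → ℝ) : 0 ≤ distZd x := le_ciInf fun _ => norm_nonneg _

lemma exists_abs_sub_lt_of_distZd_lt {x : Fin d → ℝ} {δ : ℝ} (h : distZd x < δ) :
    ∃ p : Fin d → ℤ, ∀ i, |x i - p i| < δ := by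
  obtain ⟨p, hp⟩ := exists_lt_of_ciInf_lt h
  exact ⟨p, fun i => (norm_le_pi_norm (x - fun i => (p i : ℝ)) i).trans_lt hp⟩

lemma abs_sum_mul_le_of_mem_piFinset {M : ℕ} {r : Fin d → ℤ}
    (hr : r ∈ Fintype.piFinset fun _ => Icc (0 : ℤ) M) (γ : Fin d → ℝ) :
    |∑ i, r i * γ i| ≤ M * ∑ i, |γ i| := by
  rw [mul_sum]
  refine (abs_sum_le_sum_abs _ _).trans (sum_le_sum fun i _ => ?_)
  have hri := mem_Icc.1 (Fintype.mem_piFinset.1 hr i)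
  rw [abs_mul, abs_of_nonneg (by exact_mod_cast hri.1 : (0 : ℝ) ≤ r i)]
  exact mul_le_mul_of_nonneg_right (by exact_mod_cast hri.2) (abs_nonneg _)

theorem exists_dvd_sum_mul_and_abs_sum_mul_lt {M q : ℕ} (hq : 0 < q) (p : Fin d → ℤ)
    (γ : Fin d → ℝ) {c : ℝ} (hc : 0 < c)
    (hcard : q * (2 * (M * ∑ i, |γ i|) / c + 1) < ((M : ℝ) + 1) ^ d) :
    ∃ r : Fin d → ℤ, r ≠ 0 ∧ (∀ i, |r i| ≤ M) ∧ (q : ℤ) ∣ ∑ i, r i * p i ∧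
      |∑ i, r i * γ i| < c := by
  have : NeZero q := ⟨hq.ne'⟩
  set S := (M : ℝ) * ∑ i, |γ i|
  set box := Fintype.piFinset fun _ : Fin d => Icc (0 : ℤ) M
  have hS : 0 ≤ S := by positivity
  have hbucket : ∀ r ∈ box,
      0 ≤ (∑ i, r i * γ i + S) / c ∧ (∑ i, r i * γ i + S) / c ≤ 2 * S / c := fun r hr => by
    have := abs_le.1 (abs_sum_mul_le_of_mem_piFinset hr γ)
    exact ⟨div_nonneg (by linarith) hc.le, by gcongr; linarith⟩
  have hmaps : ∀ r ∈ box, (((∑ i, r i * p i : ℤ) : ZMod q), ⌊(∑ i, r i * γ i + S) / c⌋₊) ∈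
      (univ : Finset (ZMod q)) ×ˢ range (⌊2 * S / c⌋₊ + 1) := by
    intro r hr
    simp only [mem_product, mem_univ, mem_range, true_and, Nat.lt_succ_iff]
    exact Nat.floor_le_floor (hbucket r hr).2
  have hlt : ((univ : Finset (ZMod q)) ×ˢ range (⌊2 * S / c⌋₊ + 1)).card < box.card := by
    have : (⌊2 * S / c⌋₊ : ℝ) ≤ 2 * S / c := Nat.floor_le (by positivity)
    have hbox : box.card = (M + 1) ^ d := by simp [box]
    rw [card_product, card_univ, ZMod.card, card_range, hbox]
    have : (q : ℝ) * (⌊2 * S / c⌋₊ + 1) < ((M : ℝ) + 1) ^ d :=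
      (mul_le_mul_of_nonneg_left (by linarith) (Nat.cast_nonneg _)).trans_lt hcard
    exact_mod_cast this
  obtain ⟨r₁, hr₁, r₂, hr₂, hne, heq⟩ := exists_ne_map_eq_of_card_lt_of_maps_to hlt hmaps
  simp only [Prod.mk.injEq] at heq
  refine ⟨r₁ - r₂, sub_ne_zero.2 hne, fun i => ?_, ?_, ?_⟩
  · have h₁ := mem_Icc.1 (Fintype.mem_piFinset.1 hr₁ i)
    have h₂ := mem_Icc.1 (Fintype.mem_piFinset.1 hr₂ i)
    simp only [Pi.sub_apply, abs_le]
    constructor <;> linarith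
  · have := (ZMod.intCast_eq_intCast_iff_dvd_sub _ _ _).1 heq.1.symm
    simpa [sub_mul, sum_sub_distrib] using this
  · have hfloor := congrArg (fun n : ℕ => (n : ℤ)) heq.2
    simp only [Int.natCast_floor_eq_floor (hbucket _ hr₁).1,
      Int.natCast_floor_eq_floor (hbucket _ hr₂).1] at hfloor
    have := Int.abs_sub_lt_one_of_floor_eq_floor hfloor
    rw [← sub_div, abs_div, abs_of_pos hc, div_lt_one hc] at this
    simpa [sub_mul, sum_sub_distrib] using this

lemma mul_distZ_le_of_dvd {q : ℕ} (α : Fin d → ℝ) {p r : Fin d → ℤ}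
    (hdvd : (q : ℤ) ∣ ∑ i, r i * p i) :
    q * distZ (∑ i, r i * α i) ≤ |∑ i, r i * (q * α i - p i)| := by
  obtain ⟨m, hm⟩ := hdvd
  have hm' : ∑ i, (r i : ℝ) * p i = q * m := by exact_mod_cast hm
  calc (q : ℝ) * distZ (∑ i, r i * α i) ≤ q * |∑ i, r i * α i - m| :=
        mul_le_mul_of_nonneg_left (distZ_le_abs_sub _ m) (Nat.cast_nonneg q)
    _ = |q * (∑ i, r i * α i - m)| := by rw [abs_mul, Nat.abs_cast]
    _ = |∑ i, r i * (q * α i - p i)| := by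
        rw [mul_sub, ← hm', mul_sum, ← sum_sub_distrib]
        congr 2 with i
        ring

theorem exists_pow_mul_distZ_le (hd : 1 ≤ d) {K q : ℕ} (hq : 0 < q) (hqK : q ≤ K ^ d)
    {α : Fin d → ℝ} {p : Fin d → ℤ} {δ : ℝ} (hδ : 0 < δ) (hp : ∀ i, |q * α i - p i| ≤ δ) :
    ∃ r : Fin d → ℤ, r ≠ 0 ∧ (∀ i, |r i| ≤ ((d + 1) * K : ℕ)) ∧
      (K : ℝ) ^ (d - 1) * distZ (∑ i, r i * α i) ≤ 4 * δ := by
  have hK : 0 < K := Nat.pos_of_ne_zero <| by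
    rintro rfl
    rw [zero_pow (by omega)] at hqK
    omega
  have hKd : (K : ℝ) ^ (d - 1) * K = (K : ℝ) ^ d := pow_sub_one_mul (by omega) _
  have hγ : ∑ i, |q * α i - p i| ≤ d * δ := by
    simpa using sum_le_sum fun i (_ : i ∈ univ) => hp i
  set ε := 4 * δ / (K : ℝ) ^ (d - 1)
  have hε : 0 < ε := by positivity
  have hcount : (q : ℝ) * (2 * (((d + 1) * K : ℕ) * ∑ i, |q * α i - p i|) / (q * ε) + 1)
      < (((d + 1) * K : ℕ) + 1 : ℝ) ^ d := by
    have hqK' : (q : ℝ) ≤ (K : ℝ) ^ d := by exact_mod_cast hqK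
    have hbernoulli : (d * (d + 1) / 2 + 1 : ℝ) ≤ (d + 1) ^ d := by
      have hd' : (1 : ℝ) ≤ d := by exact_mod_cast hd
      have := one_add_mul_le_pow (by linarith : (-2 : ℝ) ≤ d) d
      rw [add_comm 1 (d : ℝ)] at this
      nlinarith
    calc (q : ℝ) * (2 * (((d + 1) * K : ℕ) * ∑ i, |q * α i - p i|) / (q * ε) + 1)
        = (d + 1) * ((∑ i, |q * α i - p i|) / δ) / 2 * (K : ℝ) ^ d + q := by
          simp only [ε]
          push_cast
          field_simp
          rw [← hKd]
          ring
      _ ≤ (d + 1) * d / 2 * (K : ℝ) ^ d + (K : ℝ) ^ d := by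
          gcongr
          exact (div_le_iff₀ hδ).2 hγ
      _ = (d * (d + 1) / 2 + 1) * (K : ℝ) ^ d := by ring
      _ ≤ ((d + 1) * K) ^ d := by rw [mul_pow]; gcongr
      _ < (((d + 1) * K : ℕ) + 1 : ℝ) ^ d := by
          push_cast
          exact pow_lt_pow_left₀ (by linarith) (by positivity) (by omega)
  obtain ⟨r, hr, hrM, hdvd, hlt⟩ := exists_dvd_sum_mul_and_abs_sum_mul_lt hq p _
    (by positivity) hcount
  refine ⟨r, hr, hrM, ?_⟩
  have hdist : distZ (∑ i, r i * α i) < ε :=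
    lt_of_mul_lt_mul_left ((mul_distZ_le_of_dvd α hdvd).trans_lt hlt) (Nat.cast_nonneg q)
  calc (K : ℝ) ^ (d - 1) * distZ (∑ i, r i * α i) ≤ (K : ℝ) ^ (d - 1) * ε := by gcongr
    _ = 4 * δ := mul_div_cancel₀ _ (by positivity)

noncomputable def simultaneousApproxMin (α : Fin d → ℝ) (Q : ℕ) : ℝ :=
  sInf {x : ℝ | ∃ q : ℕ, 0 < q ∧ q ≤ Q ∧ x = distZd (fun i => (q : ℝ) * α i)}

noncomputable def linearFormMin (α : Fin d → ℝ) (R : ℕ) : ℝ :=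
  sInf {x : ℝ | ∃ r : Fin d → ℤ, r ≠ 0 ∧ (∀ i, |r i| ≤ (R : ℤ)) ∧
    x = distZ (∑ i, (r i : ℝ) * α i)}

lemma simultaneousApproxMin_nonneg (α : Fin d → ℝ) (Q : ℕ) : 0 ≤ simultaneousApproxMin α Q :=
  Real.sInf_nonneg (by rintro x ⟨q, -, -, rfl⟩; exact distZd_nonneg _)

lemma linearFormMin_nonneg (α : Fin d → ℝ) (R : ℕ) : 0 ≤ linearFormMin α R :=
  Real.sInf_nonneg (by rintro x ⟨r, -, -, rfl⟩; exact distZ_nonneg _)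

lemma exists_approx_of_simultaneousApproxMin_lt {α : Fin d → ℝ} {Q : ℕ} (hQ : 1 ≤ Q) {δ : ℝ}
    (h : simultaneousApproxMin α Q < δ) :
    ∃ q : ℕ, 0 < q ∧ q ≤ Q ∧ ∃ p : Fin d → ℤ, ∀ i, |q * α i - p i| < δ := by
  rw [simultaneousApproxMin] at h
  obtain ⟨_, ⟨q, hq, hqQ, rfl⟩, hlt⟩ := exists_lt_of_csInf_lt (by exact ⟨_, 1, one_pos, hQ, rfl⟩) h
  exact ⟨q, hq, hqQ, exists_abs_sub_lt_of_distZd_lt hlt⟩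

lemma linearFormMin_le_distZ (α : Fin d → ℝ) {R : ℕ} {r : Fin d → ℤ} (hr : r ≠ 0)
    (hrR : ∀ i, |r i| ≤ R) : linearFormMin α R ≤ distZ (∑ i, r i * α i) :=
  csInf_le ⟨0, by rintro x ⟨r, -, -, rfl⟩; exact distZ_nonneg _⟩ ⟨r, hr, hrR, rfl⟩

theorem pow_mul_linearFormMin_le (hd : 1 ≤ d) (α : Fin d → ℝ) {K R : ℕ} (hK : 1 ≤ K)
    (hKR : (d + 1) * K ≤ R) :
    (K : ℝ) ^ (d - 1) * linearFormMin α R ≤ 4 * simultaneousApproxMin α (K ^ d) := by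
  suffices h : (K : ℝ) ^ (d - 1) * linearFormMin α R / 4 ≤ simultaneousApproxMin α (K ^ d) by
    linarith
  refine le_of_forall_gt_imp_ge_of_dense fun δ hδ => ?_
  obtain ⟨q, hq, hqK, p, hp⟩ :=
    exists_approx_of_simultaneousApproxMin_lt (Nat.one_le_pow _ _ hK) hδ
  obtain ⟨r, hr, hrK, hrα⟩ := exists_pow_mul_distZ_le hd hq hqK
    ((simultaneousApproxMin_nonneg α _).trans_lt hδ) fun i => (hp i).le
  have hrR : ∀ i, |r i| ≤ R := fun i => (hrK i).trans (by exact_mod_cast hKR)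
  calc (K : ℝ) ^ (d - 1) * linearFormMin α R / 4
      ≤ (K : ℝ) ^ (d - 1) * distZ (∑ i, r i * α i) / 4 := by
        gcongr
        exact linearFormMin_le_distZ α hr hrR
    _ ≤ δ := by linarith

theorem rpow_mul_linearFormMin_le (hd : 1 ≤ d) (α : Fin d → ℝ) {ω : ℝ}
    (he : 0 ≤ (d : ℝ) - 1 + d * ω) {R : ℕ} (hR : d + 1 ≤ R) :
    (R : ℝ) ^ ((d : ℝ) - 1 + d * ω) * linearFormMin α R ≤
      4 * (2 * (d + 1)) ^ ((d : ℝ) - 1 + d * ω) *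
        ((((R / (d + 1)) ^ d : ℕ) : ℝ) ^ ω * simultaneousApproxMin α ((R / (d + 1)) ^ d)) := by
  set K := R / (d + 1)
  have hK : 1 ≤ K := (Nat.le_div_iff_mul_le (by omega)).2 (by omega)
  have hKR : (d + 1) * K ≤ R := Nat.mul_div_le R (d + 1)
  have hRK : (R : ℝ) ≤ 2 * (d + 1) * K := by
    have hRlt : R < (d + 1) * (K + 1) := Nat.lt_mul_div_succ R (by omega)
    have : R ≤ 2 * (d + 1) * K := by nlinarith [Nat.mul_le_mul_left (d + 1) hK]
    exact_mod_cast this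
  have hKpos : (0 : ℝ) < K := by exact_mod_cast hK
  have hpow : (K : ℝ) ^ ((d : ℝ) - 1) = (K : ℝ) ^ (d - 1) := by
    rw [← Real.rpow_natCast, Nat.cast_sub hd, Nat.cast_one]
  have hg := linearFormMin_nonneg α R
  calc (R : ℝ) ^ ((d : ℝ) - 1 + d * ω) * linearFormMin α R
      ≤ (2 * (d + 1) * K) ^ ((d : ℝ) - 1 + d * ω) * linearFormMin α R := by gcongr
    _ = (2 * (d + 1)) ^ ((d : ℝ) - 1 + d * ω) * ((K : ℝ) ^ ((d : ℝ) * ω) *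
          ((K : ℝ) ^ (d - 1) * linearFormMin α R)) := by
        rw [Real.mul_rpow (by positivity) hKpos.le, Real.rpow_add hKpos, hpow]
        ring
    _ ≤ (2 * (d + 1)) ^ ((d : ℝ) - 1 + d * ω) * ((K : ℝ) ^ ((d : ℝ) * ω) *
          (4 * simultaneousApproxMin α (K ^ d))) := by
        have := pow_mul_linearFormMin_le hd α hK hKR
        gcongr ?_ * (?_ * ?_)
    _ = _ := by
        rw [Real.rpow_mul hKpos.le, Real.rpow_natCast]
        push_cast
        ring

end

/-- If lim_{Q→∞} Q^ω · min_{0<q≤Q} ‖qα‖ = 0 then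
    lim_{R→∞} R^{d-1+dω} · min{‖r·α‖ : r ∈ ℤ^d, 0 < |r| ≤ R} = 0
    (d ≥ 2, ω ≥ 1/d). -/
theorem stmt6 (d : ℕ) (hd : 2 ≤ d) (ω : ℝ) (hω : 1 / (d : ℝ) ≤ ω) (α : Fin d → ℝ)
    (h : Tendsto (fun Q : ℕ => (Q : ℝ) ^ ω *
        sInf {x : ℝ | ∃ q : ℕ, 0 < q ∧ q ≤ Q ∧ x = distZd (fun i => (q : ℝ) * α i)})
      atTop (𝓝 0)) :
    Tendsto (fun R : ℕ => (R : ℝ) ^ ((d : ℝ) - 1 + d * ω) *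
        sInf {x : ℝ | ∃ r : Fin d → ℤ, r ≠ 0 ∧ (∀ i, |r i| ≤ (R : ℤ)) ∧
          x = distZ (∑ i, (r i : ℝ) * α i)})
      atTop (𝓝 0) := by
  have hd1 : 1 ≤ d := by omega
  have he : 0 ≤ (d : ℝ) - 1 + d * ω := by
    have hd' : (1 : ℝ) ≤ d := by exact_mod_cast hd1
    have := (div_le_iff₀' (by positivity : (0 : ℝ) < d)).1 hω
    linarith
  have hK : Tendsto (fun R : ℕ => (R / (d + 1)) ^ d) atTop atTop :=
    (tendsto_pow_atTop (by omega)).comp (Nat.tendsto_div_const_atTop (by omega))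
  have hbound := (h.comp hK).const_mul (4 * (2 * ((d : ℝ) + 1)) ^ ((d : ℝ) - 1 + d * ω))
  rw [mul_zero] at hbound
  exact squeeze_zero' (.of_forall fun R => mul_nonneg (by positivity) (linearFormMin_nonneg α R))
    ((eventually_ge_atTop (d + 1)).mono fun R hR => rpow_mul_linearFormMin_le hd1 α he hR) hbound
end

section
/- Let K be a real cubic field (K ⊆ ℝ, [K:ℚ] = 3) and let u ∈ O_K be a unit with u ≠ ±1. If K has a complex embedding σ_1 with σ_1(u) = |σ_1(u)| e^{2πiθ}, then θ is irrational. -/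
/-!
If `θ = p / q`, then `σ₁ (u ^ q) = |σ₁ u| ^ q` is real, so `σ₁` and its complex conjugate agree on
`u ^ q`. Two distinct `ℚ`-embeddings of a field of prime degree agree only on `ℚ`, hence `u ^ q`
is a rational unit, i.e. `±1`. So `u` is a root of unity, and the only roots of unity in a field
of odd degree are `±1`.
-/

open NumberField

theorem Complex.exp_two_pi_mul_I_mul_rat_pow_den (r : ℚ) :
    Complex.exp (2 * Real.pi * Complex.I * (r : ℝ)) ^ r.den = 1 := by
  rw [← Complex.exp_nat_mul, ← Complex.exp_int_mul_two_pi_mul_I r.num, Rat.cast_def]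
  push_cast
  field_simp

theorem AlgHom.mem_bot_of_apply_eq_of_finrank_prime {F A B : Type*} [Field F] [Ring A]
    [IsDomain A] [Semiring B] [Algebra F A] [Algebra F B] (hp : (Module.finrank F A).Prime)
    {φ ψ : A →ₐ[F] B} (hne : φ ≠ ψ) {y : A} (hy : φ y = ψ y) : y ∈ (⊥ : Subalgebra F A) := by
  have := Subalgebra.isSimpleOrder_of_finrank_prime F A hp
  have hbot : AlgHom.equalizer φ ψ = ⊥ := by
    refine (eq_bot_or_eq_top _).resolve_right fun htop ↦ hne (AlgHom.ext fun x ↦ ?_)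
    exact (AlgHom.mem_equalizer φ ψ x).mp (htop ▸ Algebra.mem_top)
  exact hbot ▸ hy

theorem NumberField.ComplexEmbedding.mem_bot_of_im_eq_zero {K : Type*} [Field K] [CharZero K]
    (hp : (Module.finrank ℚ K).Prime) {σ : K →+* ℂ} (hσ : ∃ x, (σ x).im ≠ 0) {y : K}
    (hy : (σ y).im = 0) : y ∈ (⊥ : Subalgebra ℚ K) := by
  refine AlgHom.mem_bot_of_apply_eq_of_finrank_prime hp (φ := σ.toRatAlgHom)
    (ψ := (conjugate σ).toRatAlgHom) (fun h ↦ ?_) (Complex.conj_eq_iff_im.mpr hy).symm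
  obtain ⟨x, hx⟩ := hσ
  exact hx (Complex.conj_eq_iff_im.mp (DFunLike.congr_fun h x).symm)

theorem NumberField.Units.eq_one_or_neg_one_of_mem_bot {K : Type*} [Field K] [NumberField K]
    {v : (𝓞 K)ˣ} (hv : (v : K) ∈ (⊥ : Subalgebra ℚ K)) : v = 1 ∨ v = -1 := by
  obtain ⟨s, hs⟩ := Algebra.mem_bot.mp hv
  have hs1 : |s| = 1 := by
    have hnorm := Units.norm K v
    rw [← hs, Algebra.norm_algebraMap, abs_pow] at hnorm
    exact (pow_eq_one_iff_of_nonneg (abs_nonneg s) Module.finrank_pos.ne').mp hnorm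
  refine (abs_eq zero_le_one).mp hs1 |>.imp (fun h ↦ ?_) (fun h ↦ ?_) <;>
    exact Units.coe_injective K (by simpa [h] using hs.symm)

theorem stmt12_general (K : Type*) [Field K] [NumberField K]
    (h3 : Module.finrank ℚ K = 3)
    (u : (𝓞 K)ˣ) (hu1 : (u : 𝓞 K) ≠ 1) (hu2 : (u : 𝓞 K) ≠ -1)
    (σ₁ : K →+* ℂ) (hσ : ∃ x : K, (σ₁ x).im ≠ 0)
    (θ : ℝ)
    (hθ : σ₁ (algebraMap (𝓞 K) K (u : 𝓞 K)) =
      (‖σ₁ (algebraMap (𝓞 K) K (u : 𝓞 K))‖ : ℂ) *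
        Complex.exp (2 * Real.pi * Complex.I * θ)) :
    Irrational θ := by
  rintro ⟨r, rfl⟩
  have hreal : (σ₁ (algebraMap (𝓞 K) K ↑(u ^ r.den))).im = 0 := by
    rw [Units.val_pow_eq_pow_val, map_pow, map_pow, hθ, mul_pow,
      Complex.exp_two_pi_mul_I_mul_rat_pow_den, mul_one, ← Complex.ofReal_pow, Complex.ofReal_im]
  have hpow : u ^ r.den ∈ Units.torsion K := by
    rcases Units.eq_one_or_neg_one_of_mem_bot
      (ComplexEmbedding.mem_bot_of_im_eq_zero (h3 ▸ Nat.prime_three) hσ hreal) with h | h <;>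
      rw [h]
    exacts [one_mem _, neg_one_mem_torsion]
  have htors : u ∈ Units.torsion K := (isOfFinOrder_pow.mp hpow).resolve_right r.den_nz
  rcases Units.torsion_eq_one_or_neg_one_of_odd_finrank (h3 ▸ by decide) ⟨u, htors⟩ with h | h
  · exact hu1 (congrArg Units.val h)
  · exact hu2 (congrArg Units.val h)

/-- Let K be a real cubic field (it embeds in ℝ, [K:ℚ] = 3) and u a unit of O_K
    with u ≠ ±1. If σ₁ is a complex embedding of K and
    σ₁(u) = |σ₁(u)| e^{2πiθ}, then θ is irrational. -/
theorem stmt12 (K : Type*) [Field K] [NumberField K]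
    (h3 : Module.finrank ℚ K = 3) (ι : K →+* ℝ)
    (u : (𝓞 K)ˣ) (hu1 : (u : 𝓞 K) ≠ 1) (hu2 : (u : 𝓞 K) ≠ -1)
    (σ₁ : K →+* ℂ) (hσ : ∃ x : K, (σ₁ x).im ≠ 0)
    (θ : ℝ)
    (hθ : σ₁ (algebraMap (𝓞 K) K (u : 𝓞 K)) =
      (‖σ₁ (algebraMap (𝓞 K) K (u : 𝓞 K))‖ : ℂ) *
        Complex.exp (2 * Real.pi * Complex.I * θ)) :
    Irrational θ :=
  stmt12_general K h3 u hu1 hu2 σ₁ hσ θ hθ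
end

section
/- Let K ⊆ ℝ be a totally real cubic field and let u_1, u_2 be a pair of multiplicatively independent units in an order of K, with u_a = u_1^{2a_1} u_2^{2a_2} for a ∈ ℤ². For any constants 0 < c_1 < c_2, the set U(c_1, c_2) = { u_a > 1 : a ∈ ℤ², c_1 < σ_1(u_a)/σ_2(u_a) < c_2 } is infinite. -/
/-!
Put `L_i(a) = log σ_i(u_a)`, additive in `a` because `σ_i(u_a)` is a positive square. The form
`F = L₁ - L₂` is injective on `ℤ²`: an element of the cubic field on which `σ₁` and `σ₂` agree is
rational, and the only positive rational unit of norm one is `1`. Hence `F(ℤ²)` is dense in `ℝ`.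
Since `L₀ + L₁ + L₂ = 0`, bounding `F` and `G = L₀` bounds every conjugate of `u_a`, so by
Northcott only finitely many `a` have `|F a|, |G a| ≤ C`. The set of `a` with `|F a|` small is
infinite and closed under negation, so `G` is unbounded above on it; shifting it by some `b` with
`F b` in the middle of `(log c₁, log c₂)` gives infinitely many `a` with `F a ∈ (log c₁, log c₂)`
and `G a > 0`.
-/

open NumberField

/-- The even power products u_a = u₁^{2a₁} u₂^{2a₂}, viewed in K. -/
noncomputable def uPow (K : Type*) [Field K] [NumberField K]
    (u₁ u₂ : (𝓞 K)ˣ) (a : ℤ × ℤ) : K :=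
  algebraMap (𝓞 K) K ((u₁ ^ (2 * a.1) * u₂ ^ (2 * a.2) : (𝓞 K)ˣ) : 𝓞 K)

open Set Topology

theorem Dense.inter_open_infinite {X : Type*} [TopologicalSpace X] [T1Space X]
    [∀ x : X, (𝓝[≠] x).NeBot] {s U : Set X} (hs : Dense s) (hU : IsOpen U)
    (hne : U.Nonempty) : (s ∩ U).Infinite := by
  intro hfin
  obtain ⟨x, hx⟩ := hne
  obtain ⟨y, hyU, hys⟩ := hs.inter_open_nonempty (U \ (s ∩ U)) (hU.sdiff hfin.isClosed)
    ((infinite_of_mem_nhds x (hU.mem_nhds hx)).sdiff hfin).nonempty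
  exact hyU.2 ⟨hys, hyU.1⟩

theorem AddMonoidHom.denseRange_of_injective {F : ℤ × ℤ →+ ℝ} (hF : Function.Injective F) :
    DenseRange F := by
  refine (AddSubgroup.dense_or_cyclic F.range).resolve_right ?_
  rintro ⟨c, hc⟩
  rw [← AddSubgroup.zmultiples_eq_closure] at hc
  obtain ⟨m, hm⟩ : F (1, 0) ∈ AddSubgroup.zmultiples c := hc ▸ ⟨_, rfl⟩
  obtain ⟨n, hn⟩ : F (0, 1) ∈ AddSubgroup.zmultiples c := hc ▸ ⟨_, rfl⟩
  simp only at hm hn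
  have hker : F (n, -m) = F 0 := by
    rw [show ((n, -m) : ℤ × ℤ) = n • (1, 0) - m • (0, 1) by ext <;> simp, map_sub, map_zsmul,
      map_zsmul, ← hm, ← hn, smul_smul, smul_smul, mul_comm, sub_self, map_zero]
  have hm0 : m = 0 := by simpa using congrArg Prod.snd (hF hker)
  have : F (1, 0) = F 0 := by rw [← hm, hm0, zero_smul, map_zero]
  simpa using hF this

section DenseForm

variable {A : Type*} [AddCommGroup A] {F G : A →+ ℝ}

theorem infinite_setOf_abs_lt_of_denseRange (hF : DenseRange F) {δ : ℝ} (hδ : 0 < δ) :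
    {a | |F a| < δ}.Infinite := by
  have himage : F '' {a | |F a| < δ} = range F ∩ Ioo (-δ) δ := by
    ext x
    simp only [mem_image, mem_ofPred_eq, mem_inter_iff, mem_range, mem_Ioo, ← abs_lt]
    constructor
    · rintro ⟨a, ha, rfl⟩; exact ⟨⟨a, rfl⟩, ha⟩
    · rintro ⟨⟨a, rfl⟩, ha⟩; exact ⟨a, ha, rfl⟩
  exact fun hfin => hF.inter_open_infinite isOpen_Ioo (nonempty_Ioo.2 (by linarith))
    (himage ▸ hfin.image F)

theorem infinite_setOf_abs_lt_and_lt (hF : DenseRange F)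
    (hfin : ∀ C, {a | |F a| ≤ C ∧ |G a| ≤ C}.Finite) {δ : ℝ} (hδ : 0 < δ) (t : ℝ) :
    {a | |F a| < δ ∧ t < G a}.Infinite := by
  intro hT
  refine infinite_setOf_abs_lt_of_denseRange hF hδ ((hT.union ((hT.image Neg.neg).union
    (hfin (max δ |t|)))).subset fun a ha => ?_)
  simp only [mem_ofPred_eq, mem_union, mem_image] at ha ⊢
  rcases lt_or_ge t (G a) with hup | hup
  · exact Or.inl ⟨ha, hup⟩
  rcases lt_or_ge t (-G a) with hlow | hlow
  · exact Or.inr (Or.inl ⟨-a, ⟨by rwa [map_neg, abs_neg], by rwa [map_neg]⟩, neg_neg a⟩)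
  exact Or.inr (Or.inr ⟨ha.le.trans (le_max_left _ _),
    (abs_le.2 ⟨by linarith [le_abs_self t], by linarith [le_abs_self t]⟩).trans (le_max_right _ _)⟩)

theorem infinite_setOf_mem_Ioo_and_pos (hF : DenseRange F)
    (hfin : ∀ C, {a | |F a| ≤ C ∧ |G a| ≤ C}.Finite) {α β : ℝ} (hαβ : α < β) :
    {a | F a ∈ Ioo α β ∧ 0 < G a}.Infinite := by
  obtain ⟨δ, hδ, hαβδ⟩ : ∃ δ > 0, α + δ < β - δ := ⟨(β - α) / 4, by linarith, by linarith⟩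
  obtain ⟨b, hb⟩ : ∃ b, F b ∈ Ioo (α + δ) (β - δ) :=
    hF.exists_mem_open isOpen_Ioo (nonempty_Ioo.2 hαβδ)
  refine ((infinite_setOf_abs_lt_and_lt hF hfin hδ (-G b)).image
    (add_left_injective b).injOn).mono ?_
  rintro _ ⟨a, ⟨haF, haG⟩, rfl⟩
  rw [abs_lt] at haF
  simp only [mem_ofPred_eq, mem_Ioo, map_add] at hb ⊢
  exact ⟨⟨by linarith, by linarith⟩, by linarith⟩

end DenseForm

theorem exists_algebraMap_eq_of_apply_eq {F K L : Type*} [Field F] [Field K] [Ring L]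
    [Algebra F K] [Algebra F L] (hp : (Module.finrank F K).Prime) {σ σ' : K →ₐ[F] L}
    (hσ : σ ≠ σ') {x : K} (hx : σ x = σ' x) : ∃ q : F, algebraMap F K q = x := by
  have := Subalgebra.isSimpleOrder_of_finrank_prime F K hp
  rcases eq_bot_or_eq_top (Algebra.adjoin F {x}) with hbot | htop
  · exact Algebra.mem_bot.1 (hbot ▸ Algebra.subset_adjoin rfl)
  · exact absurd (AlgHom.ext_of_adjoin_eq_top htop fun y hy => hy ▸ hx) hσ

theorem Complex.ofRealHom_comp_injective {K : Type*} [Ring K] :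
    Function.Injective (fun σ : K →+* ℝ => Complex.ofRealHom.comp σ) :=
  fun _ _ h => (RingHom.cancel_left Complex.ofReal_injective).1 h

namespace uPow

variable {K : Type*} [Field K] [NumberField K] {u₁ u₂ : (𝓞 K)ˣ}

theorem add (a b : ℤ × ℤ) : uPow K u₁ u₂ (a + b) = uPow K u₁ u₂ a * uPow K u₁ u₂ b := by
  simp only [uPow, Prod.fst_add, Prod.snd_add, mul_add, zpow_add]
  push_cast
  ring

theorem eq_sq (a : ℤ × ℤ) :
    uPow K u₁ u₂ a = ((u₁ ^ a.1 * u₂ ^ a.2 : (𝓞 K)ˣ) : K) ^ 2 := by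
  rw [uPow, mul_comm 2 a.1, mul_comm 2 a.2, zpow_mul, zpow_mul, ← mul_zpow, zpow_ofNat,
    Units.val_pow_eq_pow_val, map_pow]

theorem ne_zero (a : ℤ × ℤ) : uPow K u₁ u₂ a ≠ 0 := by
  rw [eq_sq]
  exact pow_ne_zero 2 (Units.coe_ne_zero _)

theorem pos (σ : K →+* ℝ) (a : ℤ × ℤ) : 0 < σ (uPow K u₁ u₂ a) := by
  rw [eq_sq, map_pow]
  exact sq_pos_of_ne_zero ((map_ne_zero σ).2 (Units.coe_ne_zero _))

theorem norm_eq_one (a : ℤ × ℤ) : Algebra.norm ℚ (uPow K u₁ u₂ a) = 1 := by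
  rw [eq_sq, map_pow, ← sq_abs, NumberField.Units.norm, one_pow]

theorem eq_zero_of_eq_one (hind : ∀ m n : ℤ, u₁ ^ m * u₂ ^ n = 1 → m = 0 ∧ n = 0)
    {a : ℤ × ℤ} (ha : uPow K u₁ u₂ a = 1) : a = 0 := by
  obtain ⟨h1, h2⟩ := hind _ _ (Units.coe_injective K (ha.trans (map_one _).symm))
  exact Prod.ext (by simpa using h1) (by simpa using h2)

theorem injective (hind : ∀ m n : ℤ, u₁ ^ m * u₂ ^ n = 1 → m = 0 ∧ n = 0) :
    Function.Injective (uPow K u₁ u₂) := by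
  intro a b hab
  refine sub_eq_zero.1 (eq_zero_of_eq_one hind
    (mul_right_cancel₀ (ne_zero (u₁ := u₁) (u₂ := u₂) b) ?_))
  rw [← add, sub_add_cancel, hab, one_mul]

end uPow

noncomputable def logUPow {K : Type*} [Field K] [NumberField K] (u₁ u₂ : (𝓞 K)ˣ) (σ : K →+* ℝ) :
    ℤ × ℤ →+ ℝ :=
  AddMonoidHom.mk' (fun a => Real.log (σ (uPow K u₁ u₂ a))) fun a b => by
    rw [uPow.add, map_mul, Real.log_mul (uPow.pos σ a).ne' (uPow.pos σ b).ne']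

section CubicField

variable {K : Type*} [Field K] [NumberField K] {σ₀ σ₁ σ₂ : K →+* ℝ} {u₁ u₂ : (𝓞 K)ˣ}

open scoped Classical in
theorem univ_eq_ofRealHom_comp (h3 : Module.finrank ℚ K = 3) (h01 : σ₀ ≠ σ₁) (h02 : σ₀ ≠ σ₂)
    (h12 : σ₁ ≠ σ₂) :
    (Finset.univ : Finset (K →+* ℂ)) =
      {Complex.ofRealHom.comp σ₀, Complex.ofRealHom.comp σ₁, Complex.ofRealHom.comp σ₂} := by
  have hinj := Complex.ofRealHom_comp_injective (K := K)
  refine (Finset.eq_univ_of_card _ ?_).symm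
  rw [NumberField.Embeddings.card K ℂ, h3]
  exact Finset.card_eq_three.2 ⟨_, _, _, hinj.ne h01, hinj.ne h02, hinj.ne h12, rfl⟩

theorem ratCast_norm_eq_mul (h3 : Module.finrank ℚ K = 3) (h01 : σ₀ ≠ σ₁) (h02 : σ₀ ≠ σ₂)
    (h12 : σ₁ ≠ σ₂) (x : K) : (Algebra.norm ℚ x : ℝ) = σ₀ x * σ₁ x * σ₂ x := by
  classical
  have hinj := Complex.ofRealHom_comp_injective (K := K)
  have h := Algebra.norm_eq_prod_embeddings ℚ ℂ x
  rw [← Fintype.prod_equiv (RingHom.equivRatAlgHom K ℂ) (fun φ => φ x) _ fun _ => rfl,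
    univ_eq_ofRealHom_comp h3 h01 h02 h12,
    Finset.prod_insert (by simp [hinj.ne h01, hinj.ne h02]),
    Finset.prod_insert (by simp [hinj.ne h12]), Finset.prod_singleton] at h
  simp only [eq_ratCast, RingHom.coe_comp, Function.comp_apply, Complex.ofRealHom_eq_coe] at h
  exact_mod_cast h.trans (mul_assoc _ _ _).symm

theorem logUPow_add_add_eq_zero (h3 : Module.finrank ℚ K = 3) (h01 : σ₀ ≠ σ₁) (h02 : σ₀ ≠ σ₂)
    (h12 : σ₁ ≠ σ₂) (a : ℤ × ℤ) :
    logUPow u₁ u₂ σ₀ a + logUPow u₁ u₂ σ₁ a + logUPow u₁ u₂ σ₂ a = 0 := by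
  have h := ratCast_norm_eq_mul h3 h01 h02 h12 (uPow K u₁ u₂ a)
  rw [uPow.norm_eq_one, Rat.cast_one] at h
  simp only [logUPow, AddMonoidHom.mk'_apply]
  rw [← Real.log_mul (uPow.pos σ₀ a).ne' (uPow.pos σ₁ a).ne',
    ← Real.log_mul (mul_pos (uPow.pos σ₀ a) (uPow.pos σ₁ a)).ne' (uPow.pos σ₂ a).ne', ← h,
    Real.log_one]

theorem logUPow_sub_injective (h3 : Module.finrank ℚ K = 3) (h12 : σ₁ ≠ σ₂)
    (hind : ∀ m n : ℤ, u₁ ^ m * u₂ ^ n = 1 → m = 0 ∧ n = 0) :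
    Function.Injective (logUPow u₁ u₂ σ₁ - logUPow u₁ u₂ σ₂) := by
  refine (injective_iff_map_eq_zero _).2 fun a ha => uPow.eq_zero_of_eq_one hind ?_
  have happly : σ₁ (uPow K u₁ u₂ a) = σ₂ (uPow K u₁ u₂ a) :=
    Real.log_injOn_pos (uPow.pos σ₁ a) (uPow.pos σ₂ a) (sub_eq_zero.1 ha)
  obtain ⟨q, hq⟩ := exists_algebraMap_eq_of_apply_eq (h3 ▸ Nat.prime_three)
    ((RingHom.equivRatAlgHom K ℝ).injective.ne h12) happly
  have hq3 : q ^ 3 = 1 ^ 3 := by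
    rw [one_pow, ← h3, ← Algebra.norm_algebraMap, hq, uPow.norm_eq_one]
  rw [← hq, (Odd.pow_inj (by decide)).1 hq3, map_one]

theorem finite_setOf_logUPow_le (h3 : Module.finrank ℚ K = 3) (h01 : σ₀ ≠ σ₁) (h02 : σ₀ ≠ σ₂)
    (h12 : σ₁ ≠ σ₂) (hind : ∀ m n : ℤ, u₁ ^ m * u₂ ^ n = 1 → m = 0 ∧ n = 0) (C : ℝ) :
    {a | logUPow u₁ u₂ σ₀ a ≤ C ∧ logUPow u₁ u₂ σ₁ a ≤ C ∧ logUPow u₁ u₂ σ₂ a ≤ C}.Finite := by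
  refine ((Embeddings.finite_of_norm_le K ℂ (Real.exp C)).preimage
    (uPow.injective hind).injOn).subset fun a ha => ⟨RingOfIntegers.isIntegral_coe _, fun φ => ?_⟩
  have hle (σ : K →+* ℝ) (h : logUPow u₁ u₂ σ a ≤ C) :
      ‖Complex.ofRealHom.comp σ (uPow K u₁ u₂ a)‖ ≤ Real.exp C := by
    rw [RingHom.comp_apply, Complex.ofRealHom_eq_coe, Complex.norm_real, Real.norm_of_nonneg
      (uPow.pos σ a).le, ← Real.log_le_iff_le_exp (uPow.pos σ a)]
    exact h
  have hφ := univ_eq_ofRealHom_comp h3 h01 h02 h12 ▸ Finset.mem_univ φ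
  simp only [Finset.mem_insert, Finset.mem_singleton] at hφ
  rcases hφ with rfl | rfl | rfl
  exacts [hle σ₀ ha.1, hle σ₁ ha.2.1, hle σ₂ ha.2.2]

end CubicField

/-- Let K be a totally real cubic field (three distinct real embeddings
    σ₀ = id, σ₁, σ₂) and u₁, u₂ multiplicatively independent units, with
    u_a = u₁^{2a₁} u₂^{2a₂} for a ∈ ℤ². For any 0 < c₁ < c₂, the set
    U(c₁,c₂) = { u_a > 1 : a ∈ ℤ², c₁ < σ₁(u_a)/σ₂(u_a) < c₂ } is infinite. -/
theorem stmt14 (K : Type*) [Field K] [NumberField K]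
    (h3 : Module.finrank ℚ K = 3) (σ₀ σ₁ σ₂ : K →+* ℝ)
    (h01 : σ₀ ≠ σ₁) (h02 : σ₀ ≠ σ₂) (h12 : σ₁ ≠ σ₂)
    (u₁ u₂ : (𝓞 K)ˣ)
    (hind : ∀ m n : ℤ, u₁ ^ m * u₂ ^ n = 1 → m = 0 ∧ n = 0)
    (c₁ c₂ : ℝ) (hc₁ : 0 < c₁) (hc : c₁ < c₂) :
    {x : ℝ | ∃ a : ℤ × ℤ, x = σ₀ (uPow K u₁ u₂ a) ∧ 1 < σ₀ (uPow K u₁ u₂ a) ∧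
      c₁ < σ₁ (uPow K u₁ u₂ a) / σ₂ (uPow K u₁ u₂ a) ∧
      σ₁ (uPow K u₁ u₂ a) / σ₂ (uPow K u₁ u₂ a) < c₂}.Infinite := by
  set F := logUPow u₁ u₂ σ₁ - logUPow u₁ u₂ σ₂
  set G := logUPow u₁ u₂ σ₀
  have hfin (C : ℝ) : {a | |F a| ≤ C ∧ |G a| ≤ C}.Finite := by
    refine (finite_setOf_logUPow_le h3 h01 h02 h12 hind C).subset fun a ⟨hF, hG⟩ => ?_
    have hsum := logUPow_add_add_eq_zero (u₁ := u₁) (u₂ := u₂) h3 h01 h02 h12 a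
    simp only [F, G, AddMonoidHom.sub_apply, abs_le] at hF hG
    exact ⟨by linarith, by linarith, by linarith⟩
  have hinf := infinite_setOf_mem_Ioo_and_pos
    (AddMonoidHom.denseRange_of_injective (logUPow_sub_injective h3 h12 hind)) hfin
    (Real.log_lt_log hc₁ hc)
  refine (hinf.image (σ₀.injective.comp (uPow.injective hind)).injOn).mono ?_
  rintro _ ⟨a, ⟨⟨hlo, hhi⟩, hG⟩, rfl⟩
  have hpos := uPow.pos (u₁ := u₁) (u₂ := u₂) (a := a)
  have hratio : F a = Real.log (σ₁ (uPow K u₁ u₂ a) / σ₂ (uPow K u₁ u₂ a)) :=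
    (Real.log_div (hpos σ₁).ne' (hpos σ₂).ne').symm
  refine ⟨a, rfl, (Real.log_pos_iff (hpos σ₀).le).1 hG, ?_, ?_⟩
  · exact (Real.log_lt_log_iff hc₁ (div_pos (hpos σ₁) (hpos σ₂))).1 (hratio ▸ hlo)
  · exact (Real.log_lt_log_iff (div_pos (hpos σ₁) (hpos σ₂)) (hc₁.trans hc)).1 (hratio ▸ hhi)
end

section
/- Let K be a real number field of degree d+1 with embeddings σ_0 = id, σ_1, ..., σ_d (complex embeddings paired with conjugates), let Λ ⊆ K be a full-rank lattice, s ∈ Λ* \ {0}, and u a unit of Z_Λ. Define q_u = Tr(su) and γ_u by γ_u^d = |q_u| |σ_1(su) ⋯ σ_d(su)|. Then γ_u^d = |N(s)| · | su/|su| + Σ_{i=1}^d σ_i(su)/|su| |, and consequently, as u → ∞ along any sequence of dominant units (units satisfying t ≤ |u| ≤ κt and t^{-1/d} ≤ |σ_i(u)| ≤ κ t^{-1/d} for 1 ≤ i ≤ d, with t → ∞ and κ fixed), γ_u → |N(s)|^{1/d}. -/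
/-!
Since `u` is a unit, `|N(su)| = |N(s)|`, and the norm is the product of all embeddings, so
`|σ₁(su) ⋯ σ_d(su)| = |N(s)| / |su|`; multiplying by `|Tr(su)|` gives the identity. Along a
dominant sequence the conjugates `σᵢ(su)` stay bounded while `|su| → ∞`, so
`|Tr(su)| / |su| → 1` and hence `γ_u^d → |N(s)|`.
-/

open Filter Topology

lemma Rat.abs_eq_one_of_isIntegral_of_mul_eq_one {q r : ℚ} (hq : IsIntegral ℤ q)
    (hr : IsIntegral ℤ r) (h : q * r = 1) : |q| = 1 := by
  obtain ⟨a, rfl⟩ := IsIntegrallyClosed.isIntegral_iff.mp hq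
  obtain ⟨b, rfl⟩ := IsIntegrallyClosed.isIntegral_iff.mp hr
  simp only [algebraMap_int_eq, eq_intCast] at h ⊢
  have hab : a * b = 1 := by exact_mod_cast h
  rcases Int.isUnit_iff.mp (IsUnit.of_mul_eq_one b hab) with rfl | rfl <;> simp

lemma abs_algebraNorm_eq_one_of_isIntegral_inv {K : Type*} [Field K] [NumberField K] {x : K}
    (hx0 : x ≠ 0) (hx : IsIntegral ℤ x) (hx' : IsIntegral ℤ x⁻¹) :
    |Algebra.norm ℚ x| = 1 :=
  Rat.abs_eq_one_of_isIntegral_of_mul_eq_one (Algebra.isIntegral_norm ℚ hx)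
    (Algebra.isIntegral_norm ℚ hx') (by rw [← map_mul, mul_inv_cancel₀ hx0, map_one])

lemma tendsto_norm_add_div_abs_nhds_one {ι : Type*} {l : Filter ι} {a : ι → ℝ} {b : ι → ℂ} {C : ℝ}
    (ha : Tendsto (fun n => |a n|) l atTop) (hb : ∀ᶠ n in l, ‖b n‖ ≤ C) :
    Tendsto (fun n => ‖((a n : ℂ) + b n) / ((|a n| : ℝ) : ℂ)‖) l (𝓝 1) := by
  rw [tendsto_iff_norm_sub_tendsto_zero]
  refine squeeze_zero' (Eventually.of_forall fun _ => norm_nonneg _) ?_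
    ((tendsto_const_nhds (x := C)).div_atTop ha)
  filter_upwards [hb, ha.eventually_gt_atTop 0] with n hbn han
  have hnorm_a : ‖(a n : ℂ)‖ = |a n| := by rw [Complex.norm_real, Real.norm_eq_abs]
  rw [Real.norm_eq_abs, norm_div, Complex.norm_real, Real.norm_eq_abs, abs_abs,
    ← div_self han.ne', ← sub_div, abs_div, abs_abs, div_le_div_iff_of_pos_right han, ← hnorm_a]
  exact (abs_norm_sub_norm_le _ _).trans (by simpa using hbn)

section Embeddings

variable {K : Type*} [Field K] [CharZero K] {d : ℕ} {σ₀ : K →+* ℝ} {σ : Fin d → (K →+* ℂ)}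

lemma abs_algebraNorm_eq_prod_embeddings
    (hnorm : ∀ x : K, ((Algebra.norm ℚ x : ℚ) : ℂ) = ((σ₀ x : ℝ) : ℂ) * ∏ i, σ i x) (x : K) :
    |((Algebra.norm ℚ x : ℚ) : ℝ)| = |σ₀ x| * ∏ i, ‖σ i x‖ := by
  have h := congrArg (‖·‖) (hnorm x)
  simpa only [norm_mul, norm_prod, Complex.norm_real, Real.norm_eq_abs,
    ← Complex.ofReal_ratCast] using h

lemma abs_trace_eq_norm_sum_embeddings
    (htr : ∀ x : K, ((Algebra.trace ℚ K x : ℚ) : ℂ) = ((σ₀ x : ℝ) : ℂ) + ∑ i, σ i x) (x : K) :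
    |((Algebra.trace ℚ K x : ℚ) : ℝ)| = ‖((σ₀ x : ℝ) : ℂ) + ∑ i, σ i x‖ := by
  rw [← htr, ← Complex.ofReal_ratCast, Complex.norm_real, Real.norm_eq_abs]

lemma abs_trace_mul_prod_norm_eq
    (htr : ∀ x : K, ((Algebra.trace ℚ K x : ℚ) : ℂ) = ((σ₀ x : ℝ) : ℂ) + ∑ i, σ i x)
    (hnorm : ∀ x : K, ((Algebra.norm ℚ x : ℚ) : ℂ) = ((σ₀ x : ℝ) : ℂ) * ∏ i, σ i x)
    {x : K} (hx : x ≠ 0) :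
    |((Algebra.trace ℚ K x : ℚ) : ℝ)| * ∏ i, ‖σ i x‖ =
      |((Algebra.norm ℚ x : ℚ) : ℝ)| *
        ‖(((σ₀ x : ℝ) : ℂ) + ∑ i, σ i x) / ((|σ₀ x| : ℝ) : ℂ)‖ := by
  have hσ₀x : |σ₀ x| ≠ 0 := abs_ne_zero.mpr ((map_ne_zero σ₀).mpr hx)
  rw [abs_algebraNorm_eq_prod_embeddings hnorm, abs_trace_eq_norm_sum_embeddings htr, norm_div,
    Complex.norm_real, Real.norm_eq_abs, abs_abs]
  field_simp

end Embeddings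

lemma abs_trace_mul_prod_norm_eq_of_isIntegral_inv {K : Type*} [Field K] [NumberField K] {d : ℕ}
    {σ₀ : K →+* ℝ} {σ : Fin d → (K →+* ℂ)}
    (htr : ∀ x : K, ((Algebra.trace ℚ K x : ℚ) : ℂ) = ((σ₀ x : ℝ) : ℂ) + ∑ i, σ i x)
    (hnorm : ∀ x : K, ((Algebra.norm ℚ x : ℚ) : ℂ) = ((σ₀ x : ℝ) : ℂ) * ∏ i, σ i x)
    {s u : K} (hs : s ≠ 0) (hu0 : u ≠ 0) (hu : IsIntegral ℤ u) (hu' : IsIntegral ℤ u⁻¹) :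
    |((Algebra.trace ℚ K (s * u) : ℚ) : ℝ)| * ∏ i, ‖σ i (s * u)‖ =
      |((Algebra.norm ℚ s : ℚ) : ℝ)| *
        ‖(((σ₀ (s * u) : ℝ) : ℂ) + ∑ i, σ i (s * u)) / ((|σ₀ (s * u)| : ℝ) : ℂ)‖ := by
  rw [abs_trace_mul_prod_norm_eq htr hnorm (mul_ne_zero hs hu0), map_mul, Rat.cast_mul, abs_mul,
    ← Rat.cast_abs (Algebra.norm ℚ u), abs_algebraNorm_eq_one_of_isIntegral_inv hu0 hu hu',
    Rat.cast_one, mul_one]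

theorem stmt16_general (K : Type*) [Field K] [NumberField K] (d : ℕ)
    (σ₀ : K →+* ℝ) (σ : Fin d → (K →+* ℂ))
    (htr : ∀ x : K, ((Algebra.trace ℚ K x : ℚ) : ℂ) = ((σ₀ x : ℝ) : ℂ) + ∑ i, σ i x)
    (hnorm : ∀ x : K, ((Algebra.norm ℚ x : ℚ) : ℂ) = ((σ₀ x : ℝ) : ℂ) * ∏ i, σ i x)
    (s : K) (hs : s ≠ 0)
    (u : ℕ → K) (hu : ∀ n, IsIntegral ℤ (u n) ∧ IsIntegral ℤ (u n)⁻¹)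
    (κ : ℝ) (hκ : 1 < κ) (t : ℕ → ℝ) (ht1 : ∀ n, 1 < t n)
    (ht : Tendsto t atTop atTop)
    (hdom : ∀ n, t n ≤ |σ₀ (u n)| ∧ |σ₀ (u n)| ≤ κ * t n ∧
      ∀ i, t n ^ (-(1 : ℝ) / d) ≤ Norm.norm (σ i (u n)) ∧
        Norm.norm (σ i (u n)) ≤ κ * t n ^ (-(1 : ℝ) / d)) :
    (∀ n, |((Algebra.trace ℚ K (s * u n) : ℚ) : ℝ)| *
        ∏ i, Norm.norm (σ i (s * u n)) =
      |((Algebra.norm ℚ s : ℚ) : ℝ)| *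
        Norm.norm ((((σ₀ (s * u n) : ℝ) : ℂ) + ∑ i, σ i (s * u n)) /
          ((|σ₀ (s * u n)| : ℝ) : ℂ))) ∧
    Tendsto (fun n => (|((Algebra.trace ℚ K (s * u n) : ℚ) : ℝ)| *
        ∏ i, Norm.norm (σ i (s * u n))) ^ ((1 : ℝ) / d)) atTop
      (𝓝 (|((Algebra.norm ℚ s : ℚ) : ℝ)| ^ ((1 : ℝ) / d))) := by
  have hu0 : ∀ n, u n ≠ 0 := fun n h => by
    linarith [ht1 n, (hdom n).1, show |σ₀ (u n)| = 0 by simp [h]]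
  have hidentity := fun n =>
    abs_trace_mul_prod_norm_eq_of_isIntegral_inv htr hnorm hs (hu0 n) (hu n).1 (hu n).2
  refine ⟨hidentity, ?_⟩
  have hσ₀s : 0 < |σ₀ s| := abs_pos.mpr ((map_ne_zero σ₀).mpr hs)
  have habs : Tendsto (fun n => |σ₀ (s * u n)|) atTop atTop :=
    tendsto_atTop_mono (fun n => by
      rw [map_mul, abs_mul]; exact mul_le_mul_of_nonneg_left (hdom n).1 hσ₀s.le)
      (ht.const_mul_atTop hσ₀s)
  have hbounded : ∀ n, ‖∑ i, σ i (s * u n)‖ ≤ ∑ i, ‖σ i s‖ * κ := fun n =>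
    (norm_sum_le _ _).trans <| Finset.sum_le_sum fun i _ => by
      rw [map_mul, norm_mul]
      refine mul_le_mul_of_nonneg_left (((hdom n).2.2 i).2.trans ?_) (norm_nonneg _)
      exact mul_le_of_le_one_right (by linarith)
        (Real.rpow_le_one_of_one_le_of_nonpos (ht1 n).le (by simp [neg_div]))
  simp_rw [hidentity]
  simpa using ((tendsto_norm_add_div_abs_nhds_one habs (Eventually.of_forall hbounded)).const_mul
    _).rpow_const (Or.inr (by positivity))

/-- Let K be a real number field of degree d+1 with real embedding σ₀ (the
    identity) and remaining embeddings σ₁, ..., σ_d into ℂ (so trace and norm are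
    given by the sum resp. product over all embeddings). Let s ≠ 0 and let u_n be
    a sequence of algebraic-integer units which is dominant:
    t_n ≤ |u_n| ≤ κ t_n and t_n^{-1/d} ≤ |σ_i(u_n)| ≤ κ t_n^{-1/d}, t_n → ∞.
    With q_u = Tr(su) and γ_u^d = |q_u| |σ₁(su) ⋯ σ_d(su)|, one has
    γ_u^d = |N(s)| · |su/|su| + Σ_i σ_i(su)/|su|| for every n, and
    γ_{u_n} → |N(s)|^{1/d}. -/
theorem stmt16 (K : Type*) [Field K] [NumberField K] (d : ℕ) (hd : 0 < d)
    (hrank : Module.finrank ℚ K = d + 1)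
    (σ₀ : K →+* ℝ) (σ : Fin d → (K →+* ℂ))
    (htr : ∀ x : K, ((Algebra.trace ℚ K x : ℚ) : ℂ) = ((σ₀ x : ℝ) : ℂ) + ∑ i, σ i x)
    (hnorm : ∀ x : K, ((Algebra.norm ℚ x : ℚ) : ℂ) = ((σ₀ x : ℝ) : ℂ) * ∏ i, σ i x)
    (s : K) (hs : s ≠ 0)
    (u : ℕ → K) (hu : ∀ n, IsIntegral ℤ (u n) ∧ IsIntegral ℤ (u n)⁻¹)
    (κ : ℝ) (hκ : 1 < κ) (t : ℕ → ℝ) (ht1 : ∀ n, 1 < t n)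
    (ht : Tendsto t atTop atTop)
    (hdom : ∀ n, t n ≤ |σ₀ (u n)| ∧ |σ₀ (u n)| ≤ κ * t n ∧
      ∀ i, t n ^ (-(1 : ℝ) / d) ≤ Norm.norm (σ i (u n)) ∧
        Norm.norm (σ i (u n)) ≤ κ * t n ^ (-(1 : ℝ) / d)) :
    (∀ n, |((Algebra.trace ℚ K (s * u n) : ℚ) : ℝ)| *
        ∏ i, Norm.norm (σ i (s * u n)) =
      |((Algebra.norm ℚ s : ℚ) : ℝ)| *
        Norm.norm ((((σ₀ (s * u n) : ℝ) : ℂ) + ∑ i, σ i (s * u n)) /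
          ((|σ₀ (s * u n)| : ℝ) : ℂ))) ∧
    Tendsto (fun n => (|((Algebra.trace ℚ K (s * u n) : ℚ) : ℝ)| *
        ∏ i, Norm.norm (σ i (s * u n))) ^ ((1 : ℝ) / d)) atTop
      (𝓝 (|((Algebra.norm ℚ s : ℚ) : ℝ)| ^ ((1 : ℝ) / d))) :=
  stmt16_general K d σ₀ σ htr hnorm s hs u hu κ hκ t ht1 ht hdom
end
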